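/- If e is a bridge of a connected graph G of order at least 2, then \gamma_g(G) \le \gamma_g(G - e) + 2. -/
import Mathlib


open Finset
open scoped Classical

variable {V : Type*}

/-- The closed neighborhood `N[v]` of a vertex, as a finset. -/
noncomputable def closedNbhd [Fintype V] (G : SimpleGraph V) (v : V) : Finset V :=
  Finset.univ.filter (fun u => u = v ∨ G.Adj v u)

/-- The legal moves in the domination game when `D` is the set of dominated vertices:
vertices whose closed neighborhood is not already dominated. -/
noncomputable def legalMoves [Fintype V] (G : SimpleGraph V) (D : Finset V) : Finset V :=
  Finset.univ.filter (fun v => ¬ closedNbhd G v ⊆ D)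

lemma legalMoves_nonempty [Fintype V] (G : SimpleGraph V) {D : Finset V}
    (h : D ≠ Finset.univ) : (legalMoves G D).Nonempty := by
  obtain ⟨v, hv⟩ : ∃ v, v ∉ D := by
    by_contra hc
    push_neg at hc
    exact h (Finset.eq_univ_iff_forall.2 hc)
  refine ⟨v, ?_⟩
  simp only [legalMoves, Finset.mem_filter, Finset.mem_univ, true_and]
  intro hsub
  exact hv (hsub (by simp [closedNbhd]))

lemma card_lt_of_legal [Fintype V] (G : SimpleGraph V) {D : Finset V} {v : V}
    (hv : v ∈ legalMoves G D) :
    (Finset.univ \ (D ∪ closedNbhd G v)).card < (Finset.univ \ D).card := by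
  simp only [legalMoves, Finset.mem_filter, Finset.mem_univ, true_and] at hv
  obtain ⟨u, hu1, hu2⟩ := Finset.not_subset.1 hv
  apply Finset.card_lt_card
  constructor
  · exact Finset.sdiff_subset_sdiff (le_refl _) Finset.subset_union_left
  · intro hsub
    have := hsub (Finset.mem_sdiff.2 ⟨Finset.mem_univ u, hu2⟩)
    simp only [Finset.mem_sdiff, Finset.mem_union] at this
    exact this.2 (Or.inr hu1)

/-- Optimal number of moves in the domination game on the partially dominated graph `G|D`;
`turn = true` means Dominator (the minimizer) moves next, `turn = false` means Staller
(the maximizer) moves next.  Every move must dominate a not-yet-dominated vertex and the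
game ends when all vertices are dominated. -/
noncomputable def gameVal [Fintype V] (G : SimpleGraph V) : Bool → Finset V → ℕ
  | turn, D =>
    if h : D = Finset.univ then 0
    else
      have hne : (legalMoves G D).attach.Nonempty :=
        (Finset.attach_nonempty_iff).2 (legalMoves_nonempty G h)
      if turn then
        1 + (legalMoves G D).attach.inf' hne
          (fun v => gameVal G false (D ∪ closedNbhd G v.1))
      else
        1 + (legalMoves G D).attach.sup' hne
          (fun v => gameVal G true (D ∪ closedNbhd G v.1))
  termination_by turn D => (Finset.univ \ D).card
  decreasing_by all_goals exact card_lt_of_legal G v.2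

/-- The Dominator-start game domination number `γ_g(G|S)` of the partially dominated graph. -/
noncomputable def gammaG [Fintype V] (G : SimpleGraph V) (S : Finset V) : ℕ :=
  gameVal G true S

/-- The Staller-start game domination number `γ_g'(G|S)` of the partially dominated graph. -/
noncomputable def gammaG' [Fintype V] (G : SimpleGraph V) (S : Finset V) : ℕ :=
  gameVal G false S

/-- Optimal number of (non-pass) moves in the Staller `p`-pass domination game on `G|D`:
the Dominator-start game in which Staller may additionally pass at most `p` times. -/
noncomputable def passVal [Fintype V] (G : SimpleGraph V) : Bool → ℕ → Finset V → ℕ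
  | turn, p, D =>
    if h : D = Finset.univ then 0
    else
      have hne : (legalMoves G D).attach.Nonempty :=
        (Finset.attach_nonempty_iff).2 (legalMoves_nonempty G h)
      if turn then
        1 + (legalMoves G D).attach.inf' hne
          (fun v => passVal G false p (D ∪ closedNbhd G v.1))
      else
        match p with
        | 0 =>
          1 + (legalMoves G D).attach.sup' hne
            (fun v => passVal G true 0 (D ∪ closedNbhd G v.1))
        | q + 1 =>
          max
            (1 + (legalMoves G D).attach.sup' hne
              (fun v => passVal G true (q + 1) (D ∪ closedNbhd G v.1)))
            (passVal G true q D)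
  termination_by turn p D => ((Finset.univ \ D).card, p)
  decreasing_by
  · exact Prod.Lex.left _ _ (card_lt_of_legal G v.2)
  · exact Prod.Lex.left _ _ (card_lt_of_legal G v.2)
  · exact Prod.Lex.left _ _ (card_lt_of_legal G v.2)
  · exact Prod.Lex.right _ (Nat.lt_succ_self q)

/-- `γ_g^{St,p}(G)`: the Staller `p`-pass game domination number. -/
noncomputable def gammaPass [Fintype V] (G : SimpleGraph V) (p : ℕ) : ℕ :=
  passVal G true p ∅

/-- Value (in `ℤ`) of the Dominator `1`-pass game on `G|D` in which the payoff is the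
number of moves made minus the number of passes used by Dominator; Dominator minimizes,
Staller maximizes.  `turn = true` means it is Dominator's move, `pass = true` means the
pass is still available to Dominator. -/
noncomputable def domPassVal [Fintype V] (G : SimpleGraph V) : Bool → Bool → Finset V → ℤ
  | turn, pass, D =>
    if h : D = Finset.univ then 0
    else
      have hne : (legalMoves G D).attach.Nonempty :=
        (Finset.attach_nonempty_iff).2 (legalMoves_nonempty G h)
      if turn then
        match pass with
        | false =>
          1 + (legalMoves G D).attach.inf' hne
            (fun v => domPassVal G false false (D ∪ closedNbhd G v.1))
        | true =>
          min
            (1 + (legalMoves G D).attach.inf' hne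
              (fun v => domPassVal G false true (D ∪ closedNbhd G v.1)))
            (domPassVal G false false D - 1)
      else
        1 + (legalMoves G D).attach.sup' hne
          (fun v => domPassVal G true pass (D ∪ closedNbhd G v.1))
  termination_by turn pass D => ((Finset.univ \ D).card, pass.toNat)
  decreasing_by
  · exact Prod.Lex.left _ _ (card_lt_of_legal G v.2)
  · exact Prod.Lex.left _ _ (card_lt_of_legal G v.2)
  · exact Prod.Lex.right _ (by norm_num)
  · exact Prod.Lex.left _ _ (card_lt_of_legal G v.2)

/-- A graph is a double-Staller graph if, in the Dominator `1`-pass game, Staller has a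
strategy forcing at least `γ_g(G) + p` moves, where `p ∈ {0,1}` is the number of passes
used by Dominator.  Equivalently, the optimal value of "moves minus Dominator passes" in
that game is at least `γ_g(G)`. -/
def IsDoubleStaller [Fintype V] (G : SimpleGraph V) : Prop :=
  (gammaG G ∅ : ℤ) ≤ domPassVal G true true ∅

/-- An edge cut of `G`: a set of edges whose removal disconnects `G`. -/
def IsEdgeCut (G : SimpleGraph V) (C : Set (Sym2 V)) : Prop :=
  C ⊆ G.edgeSet ∧ ¬ (G.deleteEdges C).Connected

/-- A minimal edge cut: no proper subset is an edge cut. -/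
def IsMinimalEdgeCut (G : SimpleGraph V) (C : Set (Sym2 V)) : Prop :=
  IsEdgeCut G C ∧ ∀ C' ⊂ C, ¬ IsEdgeCut G C'

/-- A minimum edge cut: an edge cut of the smallest possible cardinality (this
cardinality is the edge-connectivity `κ'(G)`). -/
def IsMinimumEdgeCut (G : SimpleGraph V) (C : Set (Sym2 V)) : Prop :=
  IsEdgeCut G C ∧ ∀ C', IsEdgeCut G C' → C.ncard ≤ C'.ncard

/-- A graph is traceable if it contains a Hamiltonian path. -/
def Traceable (G : SimpleGraph V) : Prop :=
  ∃ (a b : V) (p : G.Walk a b), p.IsHamiltonian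
/-- The disjoint union of two graphs. -/
def sumGraph {V₁ V₂ : Type*} (G₁ : SimpleGraph V₁) (G₂ : SimpleGraph V₂) :
    SimpleGraph (V₁ ⊕ V₂) :=
  SimpleGraph.fromRel (fun a b =>
    match a, b with
    | Sum.inl u, Sum.inl w => G₁.Adj u w
    | Sum.inr u, Sum.inr w => G₂.Adj u w
    | _, _ => False)

/-- The graph `H_{x,3}`: two disjoint copies of `H` (the first copy on `Sum.inl ∘ Sum.inl`,
the second on `Sum.inl ∘ Sum.inr`) joined by a path of length 3 from `x` to its copy `x'`
through the two internal vertices `y = Sum.inr 0` (adjacent to `x`) and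
`y' = Sum.inr 1` (adjacent to `x'`). -/
def Hx3 (H : SimpleGraph V) (x : V) : SimpleGraph ((V ⊕ V) ⊕ Fin 2) :=
  SimpleGraph.fromRel (fun a b =>
    match a, b with
    | Sum.inl (Sum.inl u), Sum.inl (Sum.inl w) => H.Adj u w
    | Sum.inl (Sum.inr u), Sum.inl (Sum.inr w) => H.Adj u w
    | Sum.inl (Sum.inl u), Sum.inr i => u = x ∧ i = 0
    | Sum.inl (Sum.inr u), Sum.inr i => u = x ∧ i = 1
    | Sum.inr i, Sum.inr j => i ≠ j
    | _, _ => False)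

/-- The tree `T_n`: a star `K_{1,n}` with center `Sum.inl ()`, support vertices
`Sum.inr (Sum.inl i)`, and four leaves `Sum.inr (Sum.inr (i, l))` attached to each
support vertex. -/
def Tn (n : ℕ) : SimpleGraph (Unit ⊕ (Fin n ⊕ Fin n × Fin 4)) :=
  SimpleGraph.fromRel (fun a b =>
    match a, b with
    | Sum.inl _, Sum.inr (Sum.inl _) => True
    | Sum.inr (Sum.inl i), Sum.inr (Sum.inr jl) => i = jl.1
    | _, _ => False)

/-- The graph `K_k(H)`: the disjoint union of the complete graph `K_k` (on `Fin k`,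
embedded via `Sum.inl`) and the graph `H` (embedded via `Sum.inr`), together with the
two extra edges `au` and `bv`. -/
def KkH {W : Type*} (k : ℕ) (H : SimpleGraph W) (u v : Fin k) (a b : W) :
    SimpleGraph (Fin k ⊕ W) :=
  SimpleGraph.fromRel (fun s t =>
    match s, t with
    | Sum.inl i, Sum.inl j => i ≠ j
    | Sum.inr w₁, Sum.inr w₂ => H.Adj w₁ w₂
    | Sum.inl i, Sum.inr w => (i = u ∧ w = a) ∨ (i = v ∧ w = b)
    | _, _ => False)

section Aux
variable [Fintype V]

lemma mem_closedNbhd' {G : SimpleGraph V} {u v : V} :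
    u ∈ closedNbhd G v ↔ u = v ∨ G.Adj v u := by
  simp [closedNbhd]

lemma self_mem_closedNbhd (G : SimpleGraph V) (v : V) : v ∈ closedNbhd G v :=
  mem_closedNbhd'.2 (Or.inl rfl)

lemma closedNbhd_del_subset (G : SimpleGraph V) (s : Set (Sym2 V)) (v : V) :
    closedNbhd (G.deleteEdges s) v ⊆ closedNbhd G v := by
  intro u hu
  rcases mem_closedNbhd'.1 hu with h | h
  · exact mem_closedNbhd'.2 (Or.inl h)
  · exact mem_closedNbhd'.2 (Or.inr (SimpleGraph.deleteEdges_adj.1 h).1)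

lemma eq_edge_of_mem_diff {G : SimpleGraph V} {e : Sym2 V} {u v : V}
    (h1 : u ∈ closedNbhd G v) (h2 : u ∉ closedNbhd (G.deleteEdges {e}) v) :
    e = s(v, u) ∧ G.Adj v u := by
  rcases mem_closedNbhd'.1 h1 with h | h
  · exact absurd (mem_closedNbhd'.2 (Or.inl h)) h2
  · refine ⟨?_, h⟩
    have hnadj : ¬ (G.deleteEdges {e}).Adj v u := fun ha => h2 (mem_closedNbhd'.2 (Or.inr ha))
    rw [SimpleGraph.deleteEdges_adj] at hnadj
    push_neg at hnadj
    have := hnadj h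
    simpa using this.symm

lemma mem_legalMoves {G : SimpleGraph V} {D : Finset V} {v : V} :
    v ∈ legalMoves G D ↔ ¬ closedNbhd G v ⊆ D := by
  simp [legalMoves]

lemma legalMoves_anti {G : SimpleGraph V} {A B : Finset V} (h : A ⊆ B) :
    legalMoves G B ⊆ legalMoves G A := by
  intro v hv
  rw [mem_legalMoves] at hv ⊢
  exact fun hc => hv (hc.trans h)

lemma univ_of_card_le {D : Finset V} (h : (Finset.univ \ D).card ≤ 0) : D = Finset.univ := by
  have : Finset.univ \ D = ∅ := Finset.card_eq_zero.1 (Nat.le_zero.1 h)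
  refine Finset.eq_univ_iff_forall.2 fun v => ?_
  by_contra hv
  have : v ∈ Finset.univ \ D := Finset.mem_sdiff.2 ⟨Finset.mem_univ v, hv⟩
  simp [‹Finset.univ \ D = ∅›] at this

lemma gameVal_univ (G : SimpleGraph V) (t : Bool) : gameVal G t Finset.univ = 0 := by
  rw [gameVal]; simp

lemma gameVal_true (G : SimpleGraph V) {D : Finset V} (h : D ≠ Finset.univ) :
    gameVal G true D = 1 + (legalMoves G D).attach.inf'
      ((Finset.attach_nonempty_iff).2 (legalMoves_nonempty G h))
      (fun v => gameVal G false (D ∪ closedNbhd G v.1)) := by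
  rw [gameVal]; simp [h]

lemma gameVal_false (G : SimpleGraph V) {D : Finset V} (h : D ≠ Finset.univ) :
    gameVal G false D = 1 + (legalMoves G D).attach.sup'
      ((Finset.attach_nonempty_iff).2 (legalMoves_nonempty G h))
      (fun v => gameVal G true (D ∪ closedNbhd G v.1)) := by
  rw [gameVal]; simp [h]

lemma passVal_univ (G : SimpleGraph V) (t : Bool) (p : ℕ) :
    passVal G t p Finset.univ = 0 := by
  rw [passVal]; simp

lemma passVal_true (G : SimpleGraph V) {D : Finset V} (p : ℕ) (h : D ≠ Finset.univ) :
    passVal G true p D = 1 + (legalMoves G D).attach.inf'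
      ((Finset.attach_nonempty_iff).2 (legalMoves_nonempty G h))
      (fun v => passVal G false p (D ∪ closedNbhd G v.1)) := by
  rw [passVal]; simp [h]

lemma passVal_false_zero (G : SimpleGraph V) {D : Finset V} (h : D ≠ Finset.univ) :
    passVal G false 0 D = 1 + (legalMoves G D).attach.sup'
      ((Finset.attach_nonempty_iff).2 (legalMoves_nonempty G h))
      (fun v => passVal G true 0 (D ∪ closedNbhd G v.1)) := by
  rw [passVal]; simp [h]

lemma passVal_false_succ (G : SimpleGraph V) {D : Finset V} (q : ℕ) (h : D ≠ Finset.univ) :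
    passVal G false (q + 1) D = max
      (1 + (legalMoves G D).attach.sup'
        ((Finset.attach_nonempty_iff).2 (legalMoves_nonempty G h))
        (fun v => passVal G true (q + 1) (D ∪ closedNbhd G v.1)))
      (passVal G true q D) := by
  rw [passVal]; simp [h]

end Aux

section Quad
variable [Fintype V]

lemma gameVal_quad (G : SimpleGraph V) : ∀ n : ℕ, ∀ A : Finset V,
    (Finset.univ \ A).card ≤ n →
    (∀ B, A ⊆ B → gameVal G true B ≤ gameVal G true A) ∧
    (∀ B, A ⊆ B → gameVal G false B ≤ gameVal G false A) ∧
    gameVal G true A ≤ gameVal G false A + 1 ∧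
    gameVal G false A ≤ gameVal G true A + 1 := by
  intro n
  induction n with
  | zero =>
    intro A hA
    have hAu := univ_of_card_le hA
    subst hAu
    refine ⟨fun B hB => ?_, fun B hB => ?_, ?_, ?_⟩
    · rw [Finset.univ_subset_iff.1 hB]
    · rw [Finset.univ_subset_iff.1 hB]
    · simp [gameVal_univ]
    · simp [gameVal_univ]
  | succ n ih =>
    intro A hA
    by_cases hAu : A = Finset.univ
    · subst hAu
      refine ⟨fun B hB => ?_, fun B hB => ?_, ?_, ?_⟩
      · rw [Finset.univ_subset_iff.1 hB]
      · rw [Finset.univ_subset_iff.1 hB]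
      · simp [gameVal_univ]
      · simp [gameVal_univ]
    · have hmeas : ∀ v ∈ legalMoves G A, (Finset.univ \ (A ∪ closedNbhd G v)).card ≤ n := by
        intro v hv
        have := card_lt_of_legal G hv
        omega
      have part1 : ∀ B, A ⊆ B → gameVal G true B ≤ gameVal G true A := by
        intro B hAB
        by_cases hBu : B = Finset.univ
        · subst hBu; simp [gameVal_univ]
        · rw [gameVal_true G hAu]
          obtain ⟨w, hwmem, hweq⟩ := Finset.exists_mem_eq_inf'
            ((Finset.attach_nonempty_iff).2 (legalMoves_nonempty G hAu))
            (fun v => gameVal G false (A ∪ closedNbhd G v.1))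
          rw [hweq]
          have ihw := ih (A ∪ closedNbhd G w.1) (hmeas w.1 w.2)
          by_cases hwB : w.1 ∈ legalMoves G B
          · calc gameVal G true B
                ≤ 1 + gameVal G false (B ∪ closedNbhd G w.1) := by
                  rw [gameVal_true G hBu]
                  have key : (legalMoves G B).attach.inf'
                      ((Finset.attach_nonempty_iff).2 (legalMoves_nonempty G hBu))
                      (fun v => gameVal G false (B ∪ closedNbhd G v.1))
                      ≤ gameVal G false (B ∪ closedNbhd G w.1) :=
                    Finset.inf'_le _ (Finset.mem_attach _ ⟨w.1, hwB⟩)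
                  omega
              _ ≤ 1 + gameVal G false (A ∪ closedNbhd G w.1) := by
                  have := ihw.2.1 (B ∪ closedNbhd G w.1)
                    (Finset.union_subset_union hAB (le_refl _))
                  omega
          · have hNB : closedNbhd G w.1 ⊆ B := by
              by_contra hc
              exact hwB (mem_legalMoves.2 hc)
            have h1 : gameVal G true B ≤ gameVal G true (A ∪ closedNbhd G w.1) :=
              ihw.1 B (Finset.union_subset hAB hNB)
            have h2 := ihw.2.2.1
            omega
      have part2 : ∀ B, A ⊆ B → gameVal G false B ≤ gameVal G false A := by
        intro B hAB
        by_cases hBu : B = Finset.univ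
        · subst hBu; simp [gameVal_univ]
        · rw [gameVal_false G hBu, gameVal_false G hAu]
          have hle : ∀ v ∈ (legalMoves G B).attach,
              gameVal G true (B ∪ closedNbhd G v.1) ≤
              (legalMoves G A).attach.sup'
                ((Finset.attach_nonempty_iff).2 (legalMoves_nonempty G hAu))
                (fun v => gameVal G true (A ∪ closedNbhd G v.1)) := by
            intro v _
            have hvA : v.1 ∈ legalMoves G A := legalMoves_anti hAB v.2
            have h1 : gameVal G true (B ∪ closedNbhd G v.1) ≤
                gameVal G true (A ∪ closedNbhd G v.1) :=
              (ih (A ∪ closedNbhd G v.1) (hmeas v.1 hvA)).1 _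
                (Finset.union_subset_union hAB (le_refl _))
            exact h1.trans (Finset.le_sup'
              (fun v : {x // x ∈ legalMoves G A} => gameVal G true (A ∪ closedNbhd G v.1))
              (Finset.mem_attach _ ⟨v.1, hvA⟩))
          have := Finset.sup'_le ((Finset.attach_nonempty_iff).2 (legalMoves_nonempty G hBu))
            (fun v : {x // x ∈ legalMoves G B} => gameVal G true (B ∪ closedNbhd G v.1)) hle
          omega
      have part3 : gameVal G true A ≤ gameVal G false A + 1 := by
        rw [gameVal_true G hAu, gameVal_false G hAu]
        obtain ⟨v, hvne⟩ := legalMoves_nonempty G hAu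
        have h1 : (legalMoves G A).attach.inf'
            ((Finset.attach_nonempty_iff).2 (legalMoves_nonempty G hAu))
            (fun v => gameVal G false (A ∪ closedNbhd G v.1))
            ≤ gameVal G false (A ∪ closedNbhd G v) :=
          Finset.inf'_le _ (Finset.mem_attach _ ⟨v, hvne⟩)
        have h2 := (ih (A ∪ closedNbhd G v) (hmeas v hvne)).2.2.2
        have h3 : gameVal G true (A ∪ closedNbhd G v) ≤ (legalMoves G A).attach.sup'
            ((Finset.attach_nonempty_iff).2 (legalMoves_nonempty G hAu))
            (fun v => gameVal G true (A ∪ closedNbhd G v.1)) :=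
          Finset.le_sup' (fun v : {x // x ∈ legalMoves G A} =>
            gameVal G true (A ∪ closedNbhd G v.1)) (Finset.mem_attach _ ⟨v, hvne⟩)
        omega
      have part4 : gameVal G false A ≤ gameVal G true A + 1 := by
        rw [gameVal_false G hAu]
        have hle : ∀ v ∈ (legalMoves G A).attach,
            gameVal G true (A ∪ closedNbhd G v.1) ≤ gameVal G true A := by
          intro v _
          exact part1 _ Finset.subset_union_left
        have := Finset.sup'_le ((Finset.attach_nonempty_iff).2 (legalMoves_nonempty G hAu))
          (fun v : {x // x ∈ legalMoves G A} => gameVal G true (A ∪ closedNbhd G v.1)) hle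
        omega
      exact ⟨part1, part2, part3, part4⟩

end Quad

section PassLemmas
variable [Fintype V]

lemma passVal_zero_eq (G : SimpleGraph V) : ∀ n : ℕ, ∀ D : Finset V,
    (Finset.univ \ D).card ≤ n → ∀ t, passVal G t 0 D = gameVal G t D := by
  intro n
  induction n with
  | zero =>
    intro D hD t
    rw [univ_of_card_le hD, passVal_univ, gameVal_univ]
  | succ n ih =>
    intro D hD t
    by_cases hDu : D = Finset.univ
    · rw [hDu, passVal_univ, gameVal_univ]
    · have hmeas : ∀ v ∈ legalMoves G D, (Finset.univ \ (D ∪ closedNbhd G v)).card ≤ n := by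
        intro v hv
        have := card_lt_of_legal G hv
        omega
      cases t with
      | true =>
        rw [passVal_true G 0 hDu, gameVal_true G hDu]
        exact congrArg (fun x => 1 + x)
          (Finset.inf'_congr _ rfl
            (fun (v : {x // x ∈ legalMoves G D}) _ => ih _ (hmeas v.1 v.2) false))
      | false =>
        rw [passVal_false_zero G hDu, gameVal_false G hDu]
        exact congrArg (fun x => 1 + x)
          (Finset.sup'_congr _ rfl
            (fun (v : {x // x ∈ legalMoves G D}) _ => ih _ (hmeas v.1 v.2) true))

lemma passVal_le_gameVal (G : SimpleGraph V) : ∀ p : ℕ, ∀ n : ℕ, ∀ D : Finset V,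
    (Finset.univ \ D).card ≤ n →
    passVal G true p D ≤ gameVal G true D + p ∧
    passVal G false p D ≤ gameVal G false D + p := by
  intro p
  induction p with
  | zero =>
    intro n D hD
    rw [passVal_zero_eq G n D hD true, passVal_zero_eq G n D hD false]
    omega
  | succ q ihq =>
    intro n
    induction n with
    | zero =>
      intro D hD
      rw [univ_of_card_le hD]
      simp [passVal_univ, gameVal_univ]
    | succ n ihn =>
      intro D hD
      by_cases hDu : D = Finset.univ
      · rw [hDu]; simp [passVal_univ, gameVal_univ]
      · have hmeas : ∀ v ∈ legalMoves G D, (Finset.univ \ (D ∪ closedNbhd G v)).card ≤ n := by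
          intro v hv
          have := card_lt_of_legal G hv
          omega
        constructor
        · rw [passVal_true G (q+1) hDu, gameVal_true G hDu]
          obtain ⟨w, hwmem, hweq⟩ := Finset.exists_mem_eq_inf'
            ((Finset.attach_nonempty_iff).2 (legalMoves_nonempty G hDu))
            (fun v => gameVal G false (D ∪ closedNbhd G v.1))
          rw [hweq]
          have h1 : (legalMoves G D).attach.inf'
              ((Finset.attach_nonempty_iff).2 (legalMoves_nonempty G hDu))
              (fun v => passVal G false (q+1) (D ∪ closedNbhd G v.1))
              ≤ passVal G false (q+1) (D ∪ closedNbhd G w.1) :=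
            Finset.inf'_le _ (Finset.mem_attach _ w)
          have h2 := (ihn _ (hmeas w.1 w.2)).2
          omega
        · rw [passVal_false_succ G q hDu]
          apply max_le
          · rw [gameVal_false G hDu]
            have hle : ∀ v ∈ (legalMoves G D).attach,
                passVal G true (q+1) (D ∪ closedNbhd G v.1) ≤
                ((legalMoves G D).attach.sup'
                  ((Finset.attach_nonempty_iff).2 (legalMoves_nonempty G hDu))
                  (fun v => gameVal G true (D ∪ closedNbhd G v.1))) + (q+1) := by
              intro v _
              have h1 := (ihn _ (hmeas v.1 v.2)).1
              have h2 : gameVal G true (D ∪ closedNbhd G v.1) ≤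
                  (legalMoves G D).attach.sup'
                    ((Finset.attach_nonempty_iff).2 (legalMoves_nonempty G hDu))
                    (fun v => gameVal G true (D ∪ closedNbhd G v.1)) :=
                Finset.le_sup' (fun v : {x // x ∈ legalMoves G D} =>
                  gameVal G true (D ∪ closedNbhd G v.1)) (Finset.mem_attach _ v)
              omega
            have := Finset.sup'_le ((Finset.attach_nonempty_iff).2 (legalMoves_nonempty G hDu))
              (fun v : {x // x ∈ legalMoves G D} => passVal G true (q+1) (D ∪ closedNbhd G v.1))
              hle
            omega
          · have h1 := (ihq (n+1) D hD).1
            have h2 := (gameVal_quad G (n+1) D hD).2.2.1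
            omega

end PassLemmas

section Main
variable [Fintype V]

lemma imagination (G : SimpleGraph V) (e : Sym2 V) : ∀ n : ℕ, ∀ Dr : Finset V,
    (Finset.univ \ Dr).card ≤ n → ∀ Di : Finset V, ∀ p : ℕ, Di ⊆ Dr →
    (p = 0 → ∀ x ∈ e, x ∈ Dr) →
    gameVal G true Dr ≤ passVal (G.deleteEdges {e}) true p Di + p ∧
    gameVal G false Dr ≤ passVal (G.deleteEdges {e}) false p Di + p := by
  set G' := G.deleteEdges {e} with hG'
  intro n
  induction n with
  | zero =>
    intro Dr hDr Di p _ _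
    rw [univ_of_card_le hDr]
    simp [gameVal_univ]
  | succ n ih =>
    intro Dr hDr Di p hsub hp
    by_cases hDru : Dr = Finset.univ
    · rw [hDru]; simp [gameVal_univ]
    · have hDiu : Di ≠ Finset.univ := by
        intro h
        exact hDru (Finset.univ_subset_iff.1 (h ▸ hsub))
      have hmeas : ∀ v ∈ legalMoves G Dr,
          (Finset.univ \ (Dr ∪ closedNbhd G v)).card ≤ n := by
        intro v hv
        have := card_lt_of_legal G hv
        omega
      constructor
      · -- Dominator to move
        rw [gameVal_true G hDru, passVal_true G' p hDiu]
        obtain ⟨w, hwmem, hweq⟩ := Finset.exists_mem_eq_inf'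
          ((Finset.attach_nonempty_iff).2 (legalMoves_nonempty G' hDiu))
          (fun v => passVal G' false p (Di ∪ closedNbhd G' v.1))
        rw [hweq]
        by_cases hwleg : w.1 ∈ legalMoves G Dr
        · have h1 : (legalMoves G Dr).attach.inf'
              ((Finset.attach_nonempty_iff).2 (legalMoves_nonempty G hDru))
              (fun v => gameVal G false (Dr ∪ closedNbhd G v.1))
              ≤ gameVal G false (Dr ∪ closedNbhd G w.1) :=
            Finset.inf'_le _ (Finset.mem_attach _ ⟨w.1, hwleg⟩)
          have h2 := (ih _ (hmeas w.1 hwleg) (Di ∪ closedNbhd G' w.1) p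
            (Finset.union_subset_union hsub (closedNbhd_del_subset G {e} w.1))
            (fun hp0 x hx => Finset.subset_union_left (hp hp0 x hx))).2
          omega
        · have hNw : closedNbhd G w.1 ⊆ Dr := by
            by_contra hc
            exact hwleg (mem_legalMoves.2 hc)
          obtain ⟨z, hz⟩ := legalMoves_nonempty G hDru
          have h1 : (legalMoves G Dr).attach.inf'
              ((Finset.attach_nonempty_iff).2 (legalMoves_nonempty G hDru))
              (fun v => gameVal G false (Dr ∪ closedNbhd G v.1))
              ≤ gameVal G false (Dr ∪ closedNbhd G z) :=
            Finset.inf'_le _ (Finset.mem_attach _ ⟨z, hz⟩)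
          have hsub2 : Di ∪ closedNbhd G' w.1 ⊆ Dr ∪ closedNbhd G z := by
            refine Finset.union_subset (hsub.trans Finset.subset_union_left) ?_
            exact (((closedNbhd_del_subset G {e} w.1).trans hNw)).trans
              Finset.subset_union_left
          have h2 := (ih _ (hmeas z hz) (Di ∪ closedNbhd G' w.1) p hsub2
            (fun hp0 x hx => Finset.subset_union_left (hp hp0 x hx))).2
          omega
      · -- Staller to move
        rw [gameVal_false G hDru]
        obtain ⟨v, hvmem, hveq⟩ := Finset.exists_mem_eq_sup'
          ((Finset.attach_nonempty_iff).2 (legalMoves_nonempty G hDru))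
          (fun v => gameVal G true (Dr ∪ closedNbhd G v.1))
        rw [hveq]
        by_cases hcase : closedNbhd G' v.1 ⊆ Di
        · -- Staller's move is illegal in the imagined game: the pass case
          obtain ⟨u, hu1, hu2⟩ := Finset.not_subset.1 (mem_legalMoves.1 v.2)
          have hu3 : u ∉ closedNbhd G' v.1 := fun h => hu2 (hsub (hcase h))
          obtain ⟨hee, hadj⟩ := eq_edge_of_mem_diff hu1 hu3
          cases p with
          | zero =>
            exact absurd (hp rfl u (by rw [hee]; exact Sym2.mem_mk_right _ _)) hu2
          | succ q =>
            rw [passVal_false_succ G' q hDiu]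
            have hp' : q = 0 → ∀ x ∈ e, x ∈ Dr ∪ closedNbhd G v.1 := by
              intro _ x hx
              rw [hee, Sym2.mem_iff] at hx
              rcases hx with rfl | rfl
              · exact Finset.mem_union_right _ (self_mem_closedNbhd G v.1)
              · exact Finset.mem_union_right _ hu1
            have h2 := (ih _ (hmeas v.1 v.2) Di q
              (hsub.trans Finset.subset_union_left) hp').1
            have h3 := le_max_right
              (1 + (legalMoves G' Di).attach.sup'
                ((Finset.attach_nonempty_iff).2 (legalMoves_nonempty G' hDiu))
                (fun v => passVal G' true (q + 1) (Di ∪ closedNbhd G' v.1)))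
              (passVal G' true q Di)
            omega
        · -- Staller's move is legal in the imagined game
          have hvDi : v.1 ∈ legalMoves G' Di := mem_legalMoves.2 hcase
          have h2 := (ih _ (hmeas v.1 v.2) (Di ∪ closedNbhd G' v.1) p
            (Finset.union_subset_union hsub (closedNbhd_del_subset G {e} v.1))
            (fun hp0 x hx => Finset.subset_union_left (hp hp0 x hx))).1
          have hkey : 1 + passVal G' true p (Di ∪ closedNbhd G' v.1) ≤
              passVal G' false p Di := by
            have hs : passVal G' true p (Di ∪ closedNbhd G' v.1) ≤
                (legalMoves G' Di).attach.sup'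
                  ((Finset.attach_nonempty_iff).2 (legalMoves_nonempty G' hDiu))
                  (fun u => passVal G' true p (Di ∪ closedNbhd G' u.1)) :=
              Finset.le_sup' (fun u : {x // x ∈ legalMoves G' Di} =>
                passVal G' true p (Di ∪ closedNbhd G' u.1))
                (Finset.mem_attach _ ⟨v.1, hvDi⟩)
            cases p with
            | zero =>
              rw [passVal_false_zero G' hDiu]
              omega
            | succ q =>
              rw [passVal_false_succ G' q hDiu]
              have := le_max_left
                (1 + (legalMoves G' Di).attach.sup'
                  ((Finset.attach_nonempty_iff).2 (legalMoves_nonempty G' hDiu))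
                  (fun u => passVal G' true (q + 1) (Di ∪ closedNbhd G' u.1)))
                (passVal G' true q Di)
              omega
          omega

end Main

/-- If `e` is a bridge of a connected graph `G` of order at least `2`, then
`γ_g(G) ≤ γ_g(G - e) + 2`. -/
theorem stmt6 {V : Type*} [Fintype V] (G : SimpleGraph V) (hG : G.Connected)
    (hcard : 2 ≤ Fintype.card V) (e : Sym2 V) (he : e ∈ G.edgeSet)
    (hbridge : ¬ (G.deleteEdges {e}).Connected) :
    gammaG G ∅ ≤ gammaG (G.deleteEdges {e}) ∅ + 2 := by
  unfold gammaG
  have h1 := (imagination G e (Finset.univ \ (∅ : Finset V)).card ∅ (le_refl _) ∅ 1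
    (le_refl _) (by simp)).1
  have h2 := (passVal_le_gameVal (G.deleteEdges {e}) 1
    (Finset.univ \ (∅ : Finset V)).card ∅ (le_refl _)).1
  omega
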